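/- Let q be a power of a prime, let r ≥ 2 be an integer, let K = F_q(t), and let a ∈ K be nonzero. For each positive integer n, let f_n(z) := Φ^{(z)}_{T^n}(a) ∈ K[z]. Then deg_z(f_n) = q^{r(n−1)} and the leading coefficient of f_n(z) is a^{q^{1+r(n−1)}}. -/

import Mathlib

open Polynomial

/-- The map `x ↦ t·x + z·x^q + x^{q^r}` on `K[z]`, where `K = F_q(t)` and the parameter
`z` is the polynomial variable. -/
noncomputable def drinfeldPolyPhi (q r : ℕ) {Fq : Type*} [Field Fq]
    (x : Polynomial (RatFunc Fq)) : Polynomial (RatFunc Fq) :=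
  C RatFunc.X * x + X * x ^ q + x ^ q ^ r

/-!
For a nonconstant `g ∈ K[z]` of degree `d`, the three terms of `t·g + z·g^q + g^{q^r}` have
degrees at most `d`, `1 + q d` and exactly `q^r d`; since `q, r ≥ 2` the last one strictly
dominates, so one application of the map multiplies the degree by `q^r` and raises the leading
coefficient to the power `q^r`. The first iterate `a^q z + (t a + a^{q^r})` has degree `1` and
leading coefficient `a^q`, and induction on `n` finishes the proof.
-/

lemma one_add_mul_lt_pow_mul {q r d : ℕ} (hq : 2 ≤ q) (hr : 2 ≤ r) (hd : 0 < d) :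
    1 + q * d < q ^ r * d := by
  have hqr : q * q ≤ q ^ r := by
    simpa [sq] using Nat.pow_le_pow_right (by omega) hr
  calc 1 + q * d < q * d + q * d := by nlinarith
    _ = 2 * q * d := by ring
    _ ≤ q * q * d := by gcongr
    _ ≤ q ^ r * d := Nat.mul_le_mul_right d hqr

lemma natDegree_C_mul_add_X_mul_pow_lt {R : Type*} [CommSemiring R] [NoZeroDivisors R]
    {q r : ℕ} (hq : 2 ≤ q) (hr : 2 ≤ r) (c : R) {g : R[X]} (hg : 0 < g.natDegree) :
    (C c * g + X * g ^ q).natDegree < (g ^ q ^ r).natDegree := by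
  have hX : (X * g ^ q).natDegree ≤ 1 + q * g.natDegree :=
    natDegree_mul_le.trans (add_le_add natDegree_X_le natDegree_pow_le)
  calc (C c * g + X * g ^ q).natDegree
      ≤ max (C c * g).natDegree (X * g ^ q).natDegree := natDegree_add_le _ _
    _ ≤ 1 + q * g.natDegree := max_le ((natDegree_C_mul_le c g).trans (by nlinarith)) hX
    _ < q ^ r * g.natDegree := one_add_mul_lt_pow_mul hq hr hg
    _ = (g ^ q ^ r).natDegree := (natDegree_pow g _).symm

section drinfeldPolyPhi

variable {Fq : Type*} [Field Fq] {q r : ℕ}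

lemma drinfeldPolyPhi_C (a : RatFunc Fq) :
    drinfeldPolyPhi q r (C a) = C (a ^ q) * X + C (RatFunc.X * a + a ^ q ^ r) := by
  simp only [drinfeldPolyPhi, ← C_pow, ← C_mul, map_add]
  ring

lemma natDegree_drinfeldPolyPhi (hq : 2 ≤ q) (hr : 2 ≤ r) {g : (RatFunc Fq)[X]}
    (hg : 0 < g.natDegree) : (drinfeldPolyPhi q r g).natDegree = q ^ r * g.natDegree := by
  rw [drinfeldPolyPhi, natDegree_add_eq_right_of_natDegree_lt
    (natDegree_C_mul_add_X_mul_pow_lt hq hr _ hg), natDegree_pow]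

lemma leadingCoeff_drinfeldPolyPhi (hq : 2 ≤ q) (hr : 2 ≤ r) {g : (RatFunc Fq)[X]}
    (hg : 0 < g.natDegree) : (drinfeldPolyPhi q r g).leadingCoeff = g.leadingCoeff ^ q ^ r := by
  rw [drinfeldPolyPhi, leadingCoeff_add_of_degree_lt
    (degree_lt_degree (natDegree_C_mul_add_X_mul_pow_lt hq hr _ hg)), leadingCoeff_pow]

lemma drinfeldPolyPhi_iterate_succ_C (hq : 2 ≤ q) (hr : 2 ≤ r) {a : RatFunc Fq} (ha : a ≠ 0)
    (m : ℕ) :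
    ((drinfeldPolyPhi q r)^[m + 1] (C a)).natDegree = q ^ (r * m) ∧
      ((drinfeldPolyPhi q r)^[m + 1] (C a)).leadingCoeff = a ^ q ^ (1 + r * m) := by
  induction m with
  | zero =>
    have haq : a ^ q ≠ 0 := pow_ne_zero _ ha
    rw [Function.iterate_one, drinfeldPolyPhi_C, natDegree_linear haq, leadingCoeff_linear haq]
    simp
  | succ m ih =>
    obtain ⟨hdeg, hlc⟩ := ih
    have hpos : 0 < ((drinfeldPolyPhi q r)^[m + 1] (C a)).natDegree := hdeg ▸ by positivity
    rw [Function.iterate_succ_apply', natDegree_drinfeldPolyPhi hq hr hpos,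
      leadingCoeff_drinfeldPolyPhi hq hr hpos, hdeg, hlc, ← pow_add, ← pow_mul, ← pow_add]
    constructor <;> ring_nf

end drinfeldPolyPhi

/-- For nonzero `a ∈ K = F_q(t)` and `n ≥ 1`, the polynomial
`f_n(z) = Φ^{(z)}_{T^n}(a) ∈ K[z]` (the `n`-fold iterate of `Φ^{(z)}_T` applied to `a`)
has degree `q^{r(n−1)}` in `z` and leading coefficient `a^{q^{1+r(n−1)}}`. -/
theorem drinfeld_iterate_degree_leadingCoeff
    {Fq : Type*} [Field Fq] [Fintype Fq] (q r : ℕ)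
    (hq : Fintype.card Fq = q) (hr : 2 ≤ r)
    (a : RatFunc Fq) (ha : a ≠ 0) (n : ℕ) (hn : 1 ≤ n) :
    ((drinfeldPolyPhi q r)^[n] (C a)).natDegree = q ^ (r * (n - 1)) ∧
      ((drinfeldPolyPhi q r)^[n] (C a)).leadingCoeff = a ^ q ^ (1 + r * (n - 1)) := by
  have hq2 : 2 ≤ q := hq ▸ Fintype.one_lt_card
  obtain ⟨m, rfl⟩ := Nat.exists_eq_add_of_le' hn
  simpa using drinfeldPolyPhi_iterate_succ_C hq2 hr ha m
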